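/- Let M be a matroid on a finite ground set E and let e ∈ E be an element which is not a coloop (i.e., e does not belong to every base of M). Then χ_M(T) = χ_{M∖e}(T) − χ_{M/e}(T), where M∖e is the deletion of e (the restriction of M to E \ {e}) and M/e is the contraction of e (the matroid on E \ {e} with rank function A ↦ rk_M(A ∪ {e}) − rk_M({e})). -/

import Mathlib

/-!
Split the subsets of `E` according to whether they contain `e`. Since `e` is not a coloop,
`E \ {e}` is spanning, so a subset `A` avoiding `e` contributes the same term to `χ_M` as to
`χ_{M∖e}`. For `A ⊆ E \ {e}`, `rk_{M/e}(E \ {e}) - rk_{M/e}(A) = rk(E) - rk(A ∪ {e})`, and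
`A ∪ {e}` has one more element than `A`, so it contributes minus the term of `A` in `χ_{M/e}`.
-/

open Classical

noncomputable section

/-- The rank of a subset `A` in a matroid `M`: the size of a maximal independent
subset of `A`. -/
def Matroid.mrank {α : Type*} (M : Matroid α) (A : Set α) : ℕ :=
  sSup (Set.ncard '' {I : Set α | M.Indep I ∧ I ⊆ A})

/-- The characteristic polynomial of a matroid `M` on a finite ground set:
`χ_M(T) = Σ_{A ⊆ E} (−1)^{|A|} T^{rk(E) − rk(A)}`. -/
def Matroid.charPoly {α : Type*} [Fintype α] (M : Matroid α) : Polynomial ℤ :=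
  ∑ A ∈ (Set.toFinite M.E).toFinset.powerset,
    (-1) ^ A.card * Polynomial.X ^ (M.mrank M.E - M.mrank ↑A)

namespace Matroid

open Polynomial

variable {α : Type*} {M : Matroid α} {A B R : Set α}

lemma cast_mrank [Finite α] (M : Matroid α) (A : Set α) : (M.mrank A : ℕ∞) = M.eRk A := by
  obtain ⟨I, hI⟩ := M.exists_isBasis' A
  have hmax : IsGreatest (Set.ncard '' {J : Set α | M.Indep J ∧ J ⊆ A}) I.ncard := by
    refine ⟨⟨I, ⟨hI.indep, hI.subset⟩, rfl⟩, ?_⟩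
    rintro _ ⟨J, ⟨hJ, hJA⟩, rfl⟩
    have hle : J.encard ≤ I.encard := hI.encard_eq_eRk ▸ hJ.encard_le_eRk_of_subset hJA
    rwa [← (Set.toFinite J).cast_ncard_eq, ← (Set.toFinite I).cast_ncard_eq,
      Nat.cast_le] at hle
  rw [mrank, hmax.csSup_eq, (Set.toFinite I).cast_ncard_eq, hI.encard_eq_eRk]

lemma mrank_mono [Finite α] (M : Matroid α) (h : A ⊆ B) : M.mrank A ≤ M.mrank B := by
  simpa only [← cast_mrank, Nat.cast_le] using M.eRk_mono h

lemma mrank_restrict [Finite α] (M : Matroid α) (h : A ⊆ R) : (M ↾ R).mrank A = M.mrank A := by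
  simpa only [← cast_mrank, Nat.cast_inj] using M.restrict_eRk_eq h

lemma Spanning.mrank_eq [Finite α] (hR : M.Spanning R) : M.mrank R = M.mrank M.E := by
  rw [← Nat.cast_inj (R := ℕ∞), cast_mrank, cast_mrank, eRk_ground, hR.eRk_eq]

variable [Fintype α]

lemma charPoly_eq_sum (F : Finset α) (hF : (F : Set α) = M.E) :
    M.charPoly = ∑ A ∈ F.powerset, (-1) ^ A.card * X ^ (M.mrank M.E - M.mrank A) := by
  have hground : (Set.toFinite M.E).toFinset = F := by
    ext x
    rw [Set.Finite.mem_toFinset, ← hF, Finset.mem_coe]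
  rw [charPoly, hground]

lemma charPoly_eq_sum_sub_sum_union_singleton {e : α} {F : Finset α} (he : e ∈ M.E)
    (hF : (F : Set α) = M.E \ {e}) :
    M.charPoly = ∑ A ∈ F.powerset, (-1) ^ A.card * X ^ (M.mrank M.E - M.mrank A)
      - ∑ A ∈ F.powerset, (-1) ^ A.card * X ^ (M.mrank M.E - M.mrank (↑A ∪ {e})) := by
  have heF : e ∉ F := by simp [← Finset.mem_coe, hF]
  have hground : (↑(insert e F) : Set α) = M.E := by
    rw [Finset.coe_insert, hF, Set.insert_sdiff_singleton, Set.insert_eq_of_mem he]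
  rw [charPoly_eq_sum _ hground, Finset.sum_powerset_insert heF, sub_eq_add_neg,
    ← Finset.sum_neg_distrib]
  congr 1
  refine Finset.sum_congr rfl fun A hA => ?_
  have heA : e ∉ A := fun h => heF (Finset.mem_powerset.1 hA h)
  rw [Finset.card_insert_of_notMem heA, Finset.coe_insert, Set.insert_eq, Set.union_comm, pow_succ]
  ring

lemma charPoly_restrict_of_spanning {F : Finset α} (hR : M.Spanning R) (hF : (F : Set α) = R) :
    (M ↾ R).charPoly = ∑ A ∈ F.powerset, (-1) ^ A.card * X ^ (M.mrank M.E - M.mrank A) := by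
  rw [charPoly_eq_sum F hF, restrict_ground_eq, mrank_restrict M subset_rfl, hR.mrank_eq]
  refine Finset.sum_congr rfl fun A hA => ?_
  rw [mrank_restrict M (hF ▸ Finset.coe_subset.2 (Finset.mem_powerset.1 hA))]

lemma charPoly_eq_sum_of_mrank_eq_mrank_union_sub {N : Matroid α} {C : Set α} {F : Finset α}
    (hC : C ⊆ M.E) (hNE : N.E = M.E \ C)
    (hNrk : ∀ A : Set α, A ⊆ M.E \ C → N.mrank A = M.mrank (A ∪ C) - M.mrank C)
    (hF : (F : Set α) = M.E \ C) :
    N.charPoly = ∑ A ∈ F.powerset, (-1) ^ A.card * X ^ (M.mrank M.E - M.mrank (↑A ∪ C)) := by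
  have hground : N.mrank N.E = M.mrank M.E - M.mrank C := by
    rw [hNE, hNrk _ subset_rfl, Set.sdiff_union_of_subset hC]
  rw [charPoly_eq_sum F (hF.trans hNE.symm), hground]
  refine Finset.sum_congr rfl fun A hA => ?_
  have hAE : (A : Set α) ⊆ M.E \ C := hF ▸ Finset.coe_subset.2 (Finset.mem_powerset.1 hA)
  rw [hNrk _ hAE, tsub_tsub_tsub_cancel_right (M.mrank_mono Set.subset_union_right)]

end Matroid

/-- Deletion–contraction for the characteristic polynomial: if `e ∈ E` is not a
coloop of `M` (it does not belong to every base), then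
`χ_M(T) = χ_{M∖e}(T) − χ_{M/e}(T)`, where `M∖e` is the restriction of `M` to
`E \ {e}` and `M/e` is the matroid on `E \ {e}` whose rank function is
`A ↦ rk_M(A ∪ {e}) − rk_M({e})`. -/
theorem charPoly_deletion_contraction {α : Type*} [Fintype α] (M : Matroid α)
    (e : α) (he : e ∈ M.E) (hnotcoloop : ∃ B : Set α, M.IsBase B ∧ e ∉ B)
    (Mc : Matroid α) (hMcE : Mc.E = M.E \ {e})
    (hMcrk : ∀ A : Set α, A ⊆ M.E \ {e} →
      Mc.mrank A = M.mrank (A ∪ {e}) - M.mrank {e}) :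
    M.charPoly = (M.restrict (M.E \ {e})).charPoly - Mc.charPoly := by
  obtain ⟨B, hB, heB⟩ := hnotcoloop
  have hspan : M.Spanning (M.E \ {e}) :=
    hB.spanning_of_superset (Set.subset_sdiff_singleton hB.subset_ground heB)
  have hF : ((Set.toFinite (M.E \ {e})).toFinset : Set α) = M.E \ {e} := Set.Finite.coe_toFinset _
  rw [Matroid.charPoly_eq_sum_sub_sum_union_singleton he hF,
    Matroid.charPoly_restrict_of_spanning hspan hF,
    Matroid.charPoly_eq_sum_of_mrank_eq_mrank_union_sub (Set.singleton_subset_iff.2 he) hMcE hMcrk hF]
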